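/- Let T be a closed, densely defined symmetric operator on a real Hilbert space H. The factor space S = D(T*)/D(T), equipped with the induced pairing [u,v] = (T*u,v) - (u,T*v), is a symplectic space: the pairing is well-defined on equivalence classes, bilinear, skew-symmetric, and non-degenerate. -/

import Mathlib

open scoped RealInnerProductSpace

/-!
The boundary form `ω u v = ⟪T† u, v⟫ - ⟪u, T† v⟫` on `D(T†)` is alternating, so it descends to
the quotient by any subspace of its kernel, and the descended form is nondegenerate exactly when
that subspace is the whole kernel. The kernel is `D(T)`: symmetry (`T ≤ T†`) puts `D(T)` inside it.
Conversely, `ω u = 0` says that `(u, T† u)` lies in the skew-orthogonal complement of the graph of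
`T†`, which is the double skew-orthogonal complement of the graph of `T`; as that graph is closed,
it is its own double complement, so `u ∈ D(T)`.
-/

namespace Submodule

variable {𝕜 E F : Type*} [RCLike 𝕜]
  [NormedAddCommGroup E] [InnerProductSpace 𝕜 E] [CompleteSpace E]
  [NormedAddCommGroup F] [InnerProductSpace 𝕜 F] [CompleteSpace F]

theorem adjoint_adjoint_le {g : Submodule 𝕜 (E × F)} (hg : IsClosed (g : Set (E × F))) :
    g.adjoint.adjoint ≤ g := by
  intro x hx
  let G : Submodule 𝕜 (WithLp 2 (E × F)) := g.comap (WithLp.linearEquiv 2 𝕜 (E × F)).toLinearMap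
  have : CompleteSpace G :=
    (hg.preimage (WithLp.prod_continuous_ofLp 2 E F)).completeSpace_coe
  suffices WithLp.toLp 2 x ∈ Gᗮᗮ by rwa [G.orthogonal_orthogonal] at this
  rw [mem_orthogonal]
  intro w hw
  have hw' : ((WithLp.ofLp w).2, -(WithLp.ofLp w).1) ∈ g.adjoint := by
    rw [mem_adjoint_iff]
    intro a b hab
    have hab' := (mem_orthogonal G w).mp hw (WithLp.toLp 2 (a, b)) hab
    rw [WithLp.prod_inner_apply] at hab'
    simp only [inner_neg_right, sub_neg_eq_add]
    linear_combination hab'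
  have hxw := (mem_adjoint_iff _ x).mp hx _ _ hw'
  rw [WithLp.prod_inner_apply]
  simp only [inner_neg_left] at hxw
  linear_combination -hxw

end Submodule

namespace LinearPMap

variable {H : Type*} [NormedAddCommGroup H] [InnerProductSpace ℝ H]

noncomputable def boundaryForm (A : H →ₗ.[ℝ] H) : A.domain →ₗ[ℝ] A.domain →ₗ[ℝ] ℝ :=
  (innerₗ H).compl₁₂ A.toFun A.domain.subtype - (innerₗ H).compl₁₂ A.domain.subtype A.toFun

@[simp]
theorem boundaryForm_apply (A : H →ₗ.[ℝ] H) (u v : A.domain) :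
    A.boundaryForm u v = ⟪A u, (v : H)⟫ - ⟪(u : H), A v⟫ :=
  rfl

theorem isAlt_boundaryForm (A : H →ₗ.[ℝ] H) : A.boundaryForm.IsAlt := fun u => by
  rw [boundaryForm_apply, real_inner_comm, sub_self]

variable [CompleteSpace H] {T : H →ₗ.[ℝ] H}

theorem ker_boundaryForm_adjoint (hdense : Dense (T.domain : Set H)) (hsymm : T ≤ T†)
    (hclosed : T.IsClosed) :
    LinearMap.ker T†.boundaryForm = T.domain.comap T†.domain.subtype := by
  apply le_antisymm
  · intro u hu
    have hgraph : ((u : H), T† u) ∈ T.graph.adjoint.adjoint := by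
      rw [← adjoint_graph_eq_graph_adjoint hdense, Submodule.mem_adjoint_iff]
      intro a b hab
      obtain ⟨v, rfl, rfl⟩ := (mem_graph_iff _).mp hab
      have huv : T†.boundaryForm u v = 0 := by rw [LinearMap.mem_ker.mp hu, LinearMap.zero_apply]
      rw [boundaryForm_apply] at huv
      linarith [real_inner_comm (u : H) (T† v), real_inner_comm (v : H) (T† u)]
    obtain ⟨y, hy, -⟩ := (mem_graph_iff T).mp (Submodule.adjoint_adjoint_le hclosed hgraph)
    change (u : H) ∈ T.domain
    exact (show (y : H) = u from hy) ▸ y.2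
  · intro u hu
    ext v
    let u' : T.domain := ⟨u, hu⟩
    have hTu : T† u = T u' := (hsymm.2 rfl).symm
    rw [boundaryForm_apply, hTu, (adjoint_isFormalAdjoint hdense).symm u' v]
    exact sub_self _

end LinearPMap

/-- For a closed densely defined symmetric operator `T` on a real Hilbert space,
the factor space `D(T*)/D(T)` carries a well-defined bilinear pairing induced by
`[u,v] = ⟪T*u,v⟫ - ⟪u,T*v⟫`, which is skew-symmetric and non-degenerate:
it is a symplectic space. -/
theorem factor_space_symplectic
    {H : Type*} [NormedAddCommGroup H] [InnerProductSpace ℝ H] [CompleteSpace H]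
    (T : H →ₗ.[ℝ] H) (hdense : Dense (T.domain : Set H)) (hclosed : T.IsClosed)
    (hsym : ∀ u v : T.domain, ⟪T u, (v : H)⟫ = ⟪(u : H), T v⟫) :
    ∃ Bq : (T.adjoint.domain ⧸ Submodule.comap T.adjoint.domain.subtype T.domain) →ₗ[ℝ]
        (T.adjoint.domain ⧸ Submodule.comap T.adjoint.domain.subtype T.domain) →ₗ[ℝ] ℝ,
      (∀ u v : T.adjoint.domain,
          Bq (Submodule.Quotient.mk u) (Submodule.Quotient.mk v) =
            ⟪T.adjoint u, (v : H)⟫ - ⟪(u : H), T.adjoint v⟫) ∧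
      (∀ x y, Bq x y = - Bq y x) ∧
      (∀ x, (∀ y, Bq x y = 0) → x = 0) := by
  have hker := T.ker_boundaryForm_adjoint hdense (LinearPMap.IsFormalAdjoint.le_adjoint hdense hsym) hclosed
  have halt := T.adjoint.isAlt_boundaryForm
  refine ⟨halt.isRefl.liftQ₂ _ _ hker.ge, fun u v => rfl, ?_, ?_⟩
  · intro x y
    induction x using Submodule.Quotient.induction_on with | H u =>
    induction y using Submodule.Quotient.induction_on with | H v =>
    exact (halt.neg v u).symm
  · intro x hx
    induction x using Submodule.Quotient.induction_on with | H u =>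
    rw [Submodule.Quotient.mk_eq_zero, ← hker]
    ext v
    exact hx (Submodule.Quotient.mk v)
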